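/- arXiv:2006.01578 — 3 statements merged into one kernel-verified Lean document; each statement's English description precedes it below -/
import Mathlib

section
/- Let A be a real m×n matrix and λ > 0. Define A^‡ := Aᵀ(AAᵀ + λI)⁻¹ and A^♯ := A + λ(A⁺)ᵀ, where A⁺ is the Moore–Penrose pseudoinverse of A. Then A A^‡ A^♯ = A. -/
open Matrix

/-- Let `A` be a real `m×n` matrix, `λ > 0`, `A^‡ := Aᵀ(AAᵀ + λI)⁻¹` the Tikhonov-regularised
pseudoinverse, and `A^♯ := A + λ • Pᵀ`, where `P` is the Moore–Penrose pseudoinverse of `A`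
(characterised by the four Penrose conditions).  Then `A * A^‡ * A^♯ = A`. -/
theorem stmt3 (m n : ℕ) (A : Matrix (Fin m) (Fin n) ℝ) (lam : ℝ) (hlam : 0 < lam)
    (P : Matrix (Fin n) (Fin m) ℝ)
    (hP1 : A * P * A = A) (hP2 : P * A * P = P)
    (hP3 : (A * P)ᵀ = A * P) (hP4 : (P * A)ᵀ = P * A) :
    A * (Aᵀ * (A * Aᵀ + lam • (1 : Matrix (Fin m) (Fin m) ℝ))⁻¹) * (A + lam • Pᵀ) = A := by
  set B : Matrix (Fin m) (Fin m) ℝ := A * Aᵀ + lam • 1 with hB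
  have hAAT : A * Aᵀ * Pᵀ = A := by
    have h1 : Aᵀ * Pᵀ = P * A := by rw [← transpose_mul, hP4]
    rw [Matrix.mul_assoc, h1, ← Matrix.mul_assoc, hP1]
  have hposd : B.PosDef := by
    have h1 : (A * Aᵀ).PosSemidef := by
      have := posSemidef_self_mul_conjTranspose A
      rwa [conjTranspose_eq_transpose_of_trivial] at this
    have h2 : (lam • (1 : Matrix (Fin m) (Fin m) ℝ)).PosDef := by
      rw [smul_one_eq_diagonal]
      exact posDef_diagonal_iff.2 fun _ => hlam
    exact Matrix.PosDef.posSemidef_add h1 h2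
  have hinv : B⁻¹ * B = 1 := nonsing_inv_mul B hposd.det_pos.ne'.isUnit
  have hkey : B * Pᵀ = A + lam • Pᵀ := by
    rw [hB, Matrix.add_mul, Matrix.smul_mul, Matrix.one_mul, hAAT]
  calc A * (Aᵀ * B⁻¹) * (A + lam • Pᵀ)
      = A * Aᵀ * (B⁻¹ * (B * Pᵀ)) := by rw [hkey]; simp only [Matrix.mul_assoc]
    _ = A * Aᵀ * Pᵀ := by rw [← Matrix.mul_assoc B⁻¹, hinv, Matrix.one_mul]
    _ = A := hAAT
end

section
/- Let B be a real m×n matrix, λ > 0, and E_ij the m×n single-entry matrix. Then the directional derivative of B ↦ B^‡ := Bᵀ(BBᵀ+λI)⁻¹ in the direction E_ij equals (I − B^‡ B) E_ijᵀ (BBᵀ+λI)⁻¹ − B^‡ E_ij B^‡. -/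
/-!
`B ↦ B^‡` is the product of `B ↦ Bᵀ` with the inverse of the Gram matrix `B Bᵀ + λ I`, which is
positive definite for `λ > 0`. The product rule and `d(M⁻¹) = -M⁻¹ (dM) M⁻¹` give the derivative
`Eᵀ S - Bᵀ S (E Bᵀ + B Eᵀ) S` with `S = (B Bᵀ + λ I)⁻¹`, which regroups into the stated form.
-/

open Matrix

-- Derivatives do not depend on the norm; the `L∞` operator norm makes square matrices a normed
-- algebra, as the derivative of the inverse requires.
attribute [local instance] Matrix.linftyOpNormedAddCommGroup Matrix.linftyOpNormedSpace
  Matrix.linftyOpNormedRing Matrix.linftyOpNormedAlgebra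

section MatrixCalculus

variable {𝕜 : Type*} [RCLike 𝕜] {l m n : Type*} [Fintype l] [Fintype m] [Fintype n] {x : 𝕜}

theorem HasDerivAt.matrix_mul {f : 𝕜 → Matrix l m 𝕜} {g : 𝕜 → Matrix m n 𝕜}
    {f' : Matrix l m 𝕜} {g' : Matrix m n 𝕜} (hf : HasDerivAt f f' x) (hg : HasDerivAt g g' x) :
    HasDerivAt (fun y => f y * g y) (f' * g x + f x * g') x := by
  let mul : Matrix l m 𝕜 →L[𝕜] Matrix m n 𝕜 →L[𝕜] Matrix l n 𝕜 :=
    (mulLinearMap 𝕜).mkContinuous₂ 1 fun A B => by simpa using linfty_opNorm_mul A B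
  rw [add_comm]
  exact hasDerivWithinAt_univ.mp <|
    mul.hasDerivWithinAt_of_bilinear hf.hasDerivWithinAt hg.hasDerivWithinAt

theorem HasDerivAt.matrix_transpose {f : 𝕜 → Matrix m n 𝕜} {f' : Matrix m n 𝕜}
    (hf : HasDerivAt f f' x) : HasDerivAt (fun y => (f y)ᵀ) f'ᵀ x :=
  (transposeLinearEquiv m n 𝕜 𝕜).toLinearMap.toContinuousLinearMap.hasFDerivAt.comp_hasDerivAt
    x hf

theorem HasDerivAt.matrix_entry {f : 𝕜 → Matrix m n 𝕜} {f' : Matrix m n 𝕜}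
    (hf : HasDerivAt f f' x) (i : m) (j : n) : HasDerivAt (fun y => f y i j) (f' i j) x :=
  (entryLinearMap 𝕜 𝕜 i j).toContinuousLinearMap.hasFDerivAt.comp_hasDerivAt x hf

theorem HasDerivAt.matrix_inv [DecidableEq m] {f : 𝕜 → Matrix m m 𝕜}
    {f' : Matrix m m 𝕜} (hf : HasDerivAt f f' x) (hx : IsUnit (f x)) :
    HasDerivAt (fun y => (f y)⁻¹) (-((f x)⁻¹ * f' * (f x)⁻¹)) x := by
  obtain ⟨u, hu⟩ := hx
  have h := (hasFDerivAt_ringInverse (𝕜 := 𝕜) u).comp_hasDerivAt_of_eq x hf hu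
  rw [← hu]
  simp only [Function.comp_def, ← nonsing_inv_eq_ringInverse, coe_units_inv] at h
  exact h

end MatrixCalculus

namespace Matrix

variable {𝕜 : Type*} [RCLike 𝕜] {m n : Type*} [Fintype m] [Fintype n] [DecidableEq m]

-- The paper's `B^‡`.
noncomputable def regularizedPinv (lam : 𝕜) (B : Matrix m n 𝕜) : Matrix n m 𝕜 :=
  Bᵀ * (B * Bᵀ + lam • 1)⁻¹

theorem hasDerivAt_regularizedPinv_add_smul [DecidableEq n] {lam : 𝕜} {B : Matrix m n 𝕜}
    (hB : IsUnit (B * Bᵀ + lam • 1)) (E : Matrix m n 𝕜) :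
    HasDerivAt (fun ε : 𝕜 => regularizedPinv lam (B + ε • E))
      ((1 - regularizedPinv lam B * B) * Eᵀ * (B * Bᵀ + lam • 1)⁻¹
        - regularizedPinv lam B * E * regularizedPinv lam B) 0 := by
  have hline : HasDerivAt (fun ε : 𝕜 => B + ε • E) E 0 :=
    (((hasDerivAt_id (0 : 𝕜)).smul_const E).const_add B).congr_deriv (one_smul 𝕜 E)
  have hgram : HasDerivAt (fun ε : 𝕜 => (B + ε • E) * (B + ε • E)ᵀ + lam • 1)
      (E * Bᵀ + B * Eᵀ) 0 :=
    ((hline.matrix_mul hline.matrix_transpose).add_const _).congr_deriv (by simp)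
  refine (hline.matrix_transpose.matrix_mul (hgram.matrix_inv (by simpa using hB))).congr_deriv ?_
  simp only [regularizedPinv, zero_smul, add_zero, Matrix.sub_mul, Matrix.add_mul, Matrix.mul_add, Matrix.one_mul, Matrix.mul_neg,
    Matrix.mul_assoc]
  abel

theorem isUnit_mul_transpose_add_smul_one (B : Matrix m n ℝ) {lam : ℝ} (hlam : 0 < lam) :
    IsUnit (B * Bᵀ + lam • 1) := by
  have hgram : (B * Bᵀ).PosSemidef := by
    simpa using posSemidef_self_mul_conjTranspose B
  have hreg : (lam • (1 : Matrix m m ℝ)).PosDef := by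
    rw [smul_one_eq_diagonal]
    exact PosDef.diagonal fun _ => hlam
  exact (PosDef.posSemidef_add hgram hreg).isUnit

end Matrix

/-- Directional derivative of the regularised pseudoinverse map
`B ↦ B^‡ := Bᵀ(BBᵀ+λI)⁻¹` in the direction of the single-entry matrix
`E = stdBasisMatrix i j 1`:
it equals `(I - B^‡B) Eᵀ (BBᵀ+λI)⁻¹ - B^‡ E B^‡`. -/
theorem stmt7 (m n : ℕ) (B : Matrix (Fin m) (Fin n) ℝ) (lam : ℝ) (hlam : 0 < lam)
    (i : Fin m) (j : Fin n) :
    ∀ (a : Fin n) (b : Fin m),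
      HasDerivAt
        (fun ε : ℝ =>
          ((B + ε • Matrix.single i j (1 : ℝ))ᵀ
            * ((B + ε • Matrix.single i j (1 : ℝ))
                * (B + ε • Matrix.single i j (1 : ℝ))ᵀ
                + lam • (1 : Matrix (Fin m) (Fin m) ℝ))⁻¹) a b)
        ((((1 - (Bᵀ * (B * Bᵀ + lam • (1 : Matrix (Fin m) (Fin m) ℝ))⁻¹) * B)
            * (Matrix.single i j (1 : ℝ))ᵀ
            * (B * Bᵀ + lam • (1 : Matrix (Fin m) (Fin m) ℝ))⁻¹
          - (Bᵀ * (B * Bᵀ + lam • (1 : Matrix (Fin m) (Fin m) ℝ))⁻¹)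
            * Matrix.single i j (1 : ℝ)
            * (Bᵀ * (B * Bᵀ + lam • (1 : Matrix (Fin m) (Fin m) ℝ))⁻¹)
          : Matrix (Fin n) (Fin m) ℝ) a b))
        0 := fun a b =>
  (hasDerivAt_regularizedPinv_add_smul (isUnit_mul_transpose_add_smul_one B hlam)
    (single i j 1)).matrix_entry a b
end

section
/- Let λ > 0 and B ∈ ℝ^{n×b}, where B is not assumed to have full row rank n ≤ b; suppose G ∈ ℝ^{d×b} satisfies G Bᵀ ≠ 0. Then G Bᵀ (Bᵀ)^‡ ≠ 0, where (Bᵀ)^‡ := B(BᵀB+λI)⁻¹. -/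
open Matrix

/-- For `λ > 0`, `B ∈ ℝ^{n×b}` and `G ∈ ℝ^{d×b}`: if `G Bᵀ ≠ 0`, then
`G Bᵀ (Bᵀ)^‡ ≠ 0`, where `(Bᵀ)^‡ := B(BᵀB+λI)⁻¹` is the regularised pseudoinverse
of `Bᵀ`. -/
theorem stmt18 (d n b : ℕ) (lam : ℝ) (hlam : 0 < lam)
    (B : Matrix (Fin n) (Fin b) ℝ) (G : Matrix (Fin d) (Fin b) ℝ)
    (hG : G * Bᵀ ≠ 0) :
    G * Bᵀ * (B * (Bᵀ * B + lam • (1 : Matrix (Fin b) (Fin b) ℝ))⁻¹) ≠ 0 := by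
  set M : Matrix (Fin b) (Fin b) ℝ := Bᵀ * B + lam • 1 with hM
  have hsemi : (Bᵀ * B).PosSemidef := by
    simpa using Matrix.posSemidef_conjTranspose_mul_self B
  have hdiag : (lam • (1 : Matrix (Fin b) (Fin b) ℝ)).PosDef := by
    rw [Matrix.smul_one_eq_diagonal]
    exact Matrix.posDef_diagonal_iff.mpr fun _ => hlam
  have hMpd : M.PosDef := Matrix.PosDef.posSemidef_add hsemi hdiag
  have hMu : IsUnit M.det := Matrix.isUnit_iff_isUnit_det _ |>.mp hMpd.isUnit
  intro h
  have h2 : G * Bᵀ * (B * M⁻¹) * M = 0 := by rw [h]; simp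
  rw [← Matrix.mul_assoc, Matrix.mul_assoc (G * Bᵀ * B), Matrix.nonsing_inv_mul _ hMu,
    Matrix.mul_one] at h2
  have h3 : G * (Bᵀ * B) = 0 := by rw [← Matrix.mul_assoc]; exact h2
  have h4 : G * Bᵀ = 0 := by
    have := (Matrix.mul_conjTranspose_mul_self_eq_zero B G).mp (by simpa using h3)
    simpa using this
  exact hG h4
end
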